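/- With P-probability 1 over sequences sampled from P: for every Q ∈ ℳ with limsup_{t→∞} w(Q | x_{<t}) > 0, the conditional measures of Q merge with those of P in total variation, i.e. lim_{t→∞} d(P, Q | x_{<t}) = 0. -/

import Mathlib

/-!
Let `ξ = ∑ w_j Q_j` be the Bayes mixture and `f_j = dQ_j/dξ`. Every `Q_j ≪ ξ`, and the posterior
weight of `Q_j` after `x_{<t}` is `w_j` times the `ξ`-average of `f_j` over the cylinder of
`x_{<t}`. By Lévy's upward theorem for the prefix filtration these averages converge `ξ`-a.s.
(hence `P`-a.s.) to `f_j(x)`, and the mean absolute deviation of `f_j` from its cylinder average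
tends to `0`. A positive limsup of the posterior of `Q` forces `f_Q(x) > 0`, and `f_P(x) > 0`
holds `P`-a.s. On a cylinder the variation distance of the two conditional measures is at most
the sum of the deviations of `f_P` and `f_Q` divided by their averages, and this tends to `0`.
-/

open MeasureTheory Filter

/-- The cylinder set of infinite sequences agreeing with `x` on the first `t` coordinates,
i.e. the set of sequences beginning with the prefix `x_{<t}`. -/
def cyl {X : Type*} (x : ℕ → X) (t : ℕ) : Set (ℕ → X) := {y | ∀ i < t, y i = x i}

/-- `Q(x_{<t})`: the `Q`-measure of the cylinder set of sequences beginning with `x_{<t}`,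
as a real number. -/
noncomputable def prefProb {X : Type*} [MeasurableSpace X]
    (Q : Measure (ℕ → X)) (x : ℕ → X) (t : ℕ) : ℝ :=
  (Q (cyl x t)).toReal

/-- The posterior weight `w(Q i | x_{<t}) = w(Q i)·(Q i)(x_{<t}) / ∑_{j} w(Q j)·(Q j)(x_{<t})`. -/
noncomputable def post {X ι : Type*} [MeasurableSpace X]
    (w : ι → ℝ) (Q : ι → Measure (ℕ → X)) (i : ι) (x : ℕ → X) (t : ℕ) : ℝ :=
  w i * prefProb (Q i) x t / ∑' j, w j * prefProb (Q j) x t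

/-- `Q(ℰ | x_{<t})`: the conditional probability, given the prefix `x_{<t}`, that the next `k`
symbols form a string belonging to `ℰ ⊆ 𝒳^k`. -/
noncomputable def condProb {X : Type*} [MeasurableSpace X]
    (Q : Measure (ℕ → X)) (x : ℕ → X) (t k : ℕ) (E : Set (Fin k → X)) : ℝ :=
  (Q {y | y ∈ cyl x t ∧ (fun j : Fin k => y (t + j)) ∈ E}).toReal / prefProb Q x t

/-- The `k`-step variation distance
`d_k(P, Q | x_{<t}) = max_{ℰ ⊆ 𝒳^k} |P(ℰ | x_{<t}) − Q(ℰ | x_{<t})|`. -/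
noncomputable def dk {X : Type*} [MeasurableSpace X]
    (P Q : Measure (ℕ → X)) (x : ℕ → X) (t k : ℕ) : ℝ :=
  ⨆ E : Set (Fin k → X), |condProb P x t k E - condProb Q x t k E|

/-- The total variation distance `d(P, Q | x_{<t}) = lim_{k→∞} d_k(P, Q | x_{<t})`; since
`d_k` is non-decreasing in `k` and bounded by 1, the limit equals the supremum over `k`. -/
noncomputable def dTV {X : Type*} [MeasurableSpace X]
    (P Q : Measure (ℕ → X)) (x : ℕ → X) (t : ℕ) : ℝ :=
  ⨆ k : ℕ, dk P Q x t k

open scoped Topology ENNReal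

lemma tendsto_zero_of_forall_le_of_tendsto {u : ℕ → ℝ} {v : ℕ → ℕ → ℝ} {L : ℕ → ℝ}
    (hu : ∀ t, 0 ≤ u t) (hle : ∀ s t, s ≤ t → u t ≤ v s t)
    (hv : ∀ s, Tendsto (v s) atTop (𝓝 (L s))) (hL : Tendsto L atTop (𝓝 0)) :
    Tendsto u atTop (𝓝 0) := by
  refine tendsto_order.2
    ⟨fun a ha => Eventually.of_forall fun t => ha.trans_le (hu t), fun ε hε => ?_⟩
  obtain ⟨s, hs⟩ := (hL.eventually (gt_mem_nhds hε)).exists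
  filter_upwards [(hv s).eventually (gt_mem_nhds hs), eventually_ge_atTop s] with t hvt hst
  exact (hle s t hst).trans_lt hvt

lemma abs_div_sub_div_le {u v a b : ℝ} (ha : 0 < a) (hb : 0 < b) :
    |u / a - v / b| ≤ |u - a| / a + |v - b| / b :=
  calc |u / a - v / b| = |(u - a) / a - (v - b) / b| := by
        congr 1
        field_simp
        ring
    _ ≤ |(u - a) / a| + |(v - b) / b| := abs_sub _ _
    _ = |u - a| / a + |v - b| / b := by rw [abs_div, abs_div, abs_of_pos ha, abs_of_pos hb]

section Cylinder

variable {X : Type*}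

def prefixMap (t : ℕ) (y : ℕ → X) : Fin t → X := fun j => y j

lemma cyl_eq_preimage_prefixMap (x : ℕ → X) (t : ℕ) :
    cyl x t = prefixMap t ⁻¹' {prefixMap t x} := by
  ext y
  simp [cyl, prefixMap, funext_iff, Fin.forall_iff]

lemma cyl_eq_of_mem {x y : ℕ → X} {s t : ℕ} (hy : y ∈ cyl x t) (hst : s ≤ t) :
    cyl y s = cyl x s := by
  ext z
  exact forall₂_congr fun i hi => by rw [hy i (hi.trans_le hst)]

variable [MeasurableSpace X]

lemma measurable_prefixMap (t : ℕ) : Measurable (prefixMap (X := X) t) :=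
  measurable_pi_lambda _ fun _ => measurable_pi_apply _

lemma measurableSet_cyl [MeasurableSingletonClass X] (x : ℕ → X) (t : ℕ) :
    MeasurableSet (cyl x t) := by
  rw [cyl_eq_preimage_prefixMap]
  exact measurable_prefixMap t (measurableSet_singleton _)

lemma setAverage_cyl_eq_comp (μ : Measure (ℕ → X)) (g : (ℕ → X) → ℝ) (t : ℕ) :
    (fun x => ⨍ y in cyl x t, g y ∂μ)
      = (fun v => ⨍ y in prefixMap t ⁻¹' {v}, g y ∂μ) ∘ prefixMap t := by
  funext x
  rw [Function.comp_apply, cyl_eq_preimage_prefixMap]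

variable (X) in
def prefixFiltration : Filtration ℕ (inferInstance : MeasurableSpace (ℕ → X)) where
  seq t := MeasurableSpace.comap (prefixMap t) MeasurableSpace.pi
  mono' s t hst := by
    have hcomp : prefixMap (X := X) s = (fun v : Fin t → X => v ∘ Fin.castLE hst) ∘ prefixMap t :=
      rfl
    simp only
    rw [hcomp, ← MeasurableSpace.comap_comp]
    exact MeasurableSpace.comap_mono
      (measurable_pi_lambda _ fun _ => measurable_pi_apply _).comap_le
  le' t := (measurable_prefixMap t).comap_le

lemma iSup_prefixFiltration :
    ⨆ t, prefixFiltration X t = (inferInstance : MeasurableSpace (ℕ → X)) := by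
  refine le_antisymm (iSup_le (prefixFiltration X).le) ?_
  refine iSup_le fun n => le_iSup_of_le (n + 1) ?_
  have hcoord : (fun y : ℕ → X => y n) = (fun v => v (Fin.last n)) ∘ prefixMap (n + 1) := rfl
  rw [hcoord, ← MeasurableSpace.comap_comp]
  exact MeasurableSpace.comap_mono (measurable_pi_apply _).comap_le

end Cylinder

section Levy

variable {X : Type*} [MeasurableSpace X] [MeasurableSingletonClass X]
  {μ : Measure (ℕ → X)} [IsFiniteMeasure μ] {g : (ℕ → X) → ℝ}

lemma setIntegral_cyl_setAverage_cyl (x : ℕ → X) (t : ℕ) :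
    ∫ y in cyl x t, (⨍ z in cyl y t, g z ∂μ) ∂μ = ∫ y in cyl x t, g y ∂μ := by
  rw [setIntegral_congr_fun (measurableSet_cyl x t) fun y hy => by rw [cyl_eq_of_mem hy le_rfl],
    setIntegral_setAverage]

variable [Finite X]

lemma integrable_setAverage_cyl (g : (ℕ → X) → ℝ) (t : ℕ) :
    Integrable (fun x => ⨍ y in cyl x t, g y ∂μ) μ := by
  rw [setAverage_cyl_eq_comp]
  exact Integrable.of_finite.comp_measurable (measurable_prefixMap t)

lemma condExp_prefixFiltration_ae_eq (hg : Integrable g μ) (t : ℕ) :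
    μ[g | prefixFiltration X t] =ᵐ[μ] fun x => ⨍ y in cyl x t, g y ∂μ := by
  refine (ae_eq_condExp_of_forall_setIntegral_eq ((prefixFiltration X).le t) hg
    (fun s _ _ => ?_) ?_ ?_).symm
  · exact (integrable_setAverage_cyl g t).integrableOn
  · rintro _ ⟨T, -, rfl⟩ -
    have hfiber : ∀ v, ∫ y in prefixMap t ⁻¹' {v}, (⨍ z in cyl y t, g z ∂μ) ∂μ
        = ∫ y in prefixMap t ⁻¹' {v}, g y ∂μ := by
      intro v
      obtain ⟨x, rfl⟩ | hv := em (v ∈ Set.range (prefixMap t))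
      · rw [← cyl_eq_preimage_prefixMap]
        exact setIntegral_cyl_setAverage_cyl x t
      · rw [Set.preimage_singleton_eq_empty.2 hv, Measure.restrict_empty, integral_zero_measure,
          integral_zero_measure]
    have hunion : prefixMap t ⁻¹' T = ⋃ v ∈ T.toFinite.toFinset, prefixMap t ⁻¹' {v} := by
      ext y
      simp
    have hmeas : ∀ v ∈ T.toFinite.toFinset, MeasurableSet (prefixMap (X := X) t ⁻¹' {v}) :=
      fun v _ => measurable_prefixMap t (measurableSet_singleton v)
    have hdisj : Set.PairwiseDisjoint ↑T.toFinite.toFinset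
        fun v => prefixMap (X := X) t ⁻¹' {v} :=
      fun v _ w _ hvw => (Set.disjoint_singleton.2 hvw).preimage _
    rw [hunion, integral_biUnion_finset _ hmeas hdisj, integral_biUnion_finset _ hmeas hdisj]
    · exact Finset.sum_congr rfl fun v _ => hfiber v
    · exact fun v _ => hg.integrableOn
    · exact fun v _ => (integrable_setAverage_cyl g t).integrableOn
  · rw [setAverage_cyl_eq_comp]
    exact ((measurable_of_finite _).comp (comap_measurable _)).aestronglyMeasurable

theorem tendsto_setAverage_cyl (hg : Integrable g μ) :
    ∀ᵐ x ∂μ, Tendsto (fun t => ⨍ y in cyl x t, g y ∂μ) atTop (𝓝 (g x)) := by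
  have hg' : StronglyMeasurable[⨆ t, prefixFiltration X t] (hg.1.mk g) := by
    rw [iSup_prefixFiltration]
    exact hg.1.stronglyMeasurable_mk
  have havg : ∀ x t, ⨍ y in cyl x t, hg.1.mk g y ∂μ = ⨍ y in cyl x t, g y ∂μ := fun x t =>
    setAverage_congr_fun (measurableSet_cyl x t) (hg.1.ae_eq_mk.mono fun y hy _ => hy.symm)
  filter_upwards [(hg.congr hg.1.ae_eq_mk).tendsto_ae_condExp hg',
    ae_all_iff.2 fun t => condExp_prefixFiltration_ae_eq (hg.congr hg.1.ae_eq_mk) t,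
    hg.1.ae_eq_mk] with x hlim hcond hx
  rw [hx]
  exact hlim.congr fun t => (hcond t).trans (havg x t)

lemma setAverage_abs_sub_setAverage_le (hg : Integrable g μ) {s t : ℕ} (hst : s ≤ t)
    (x : ℕ → X) :
    ⨍ y in cyl x t, |g y - ⨍ z in cyl x t, g z ∂μ| ∂μ ≤
      ⨍ y in cyl x t, |g y - ⨍ z in cyl y s, g z ∂μ| ∂μ
        + |⨍ z in cyl x s, g z ∂μ - ⨍ z in cyl x t, g z ∂μ| := by
  set c := |⨍ z in cyl x s, g z ∂μ - ⨍ z in cyl x t, g z ∂μ|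
  have hint : Integrable (fun y => |g y - ⨍ z in cyl y s, g z ∂μ|) μ :=
    (hg.sub (integrable_setAverage_cyl g s)).abs
  have hpt : ∀ y ∈ cyl x t,
      |g y - ⨍ z in cyl x t, g z ∂μ| ≤ |g y - ⨍ z in cyl y s, g z ∂μ| + c := by
    intro y hy
    rw [cyl_eq_of_mem hy hst]
    exact abs_sub_le _ _ _
  have hc : (μ.real (cyl x t))⁻¹ * μ.real (cyl x t) * c ≤ c := by
    have hc0 : 0 ≤ c := abs_nonneg _
    rcases eq_or_ne (μ.real (cyl x t)) 0 with h | h <;> simp [h, hc0]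
  rw [setAverage_eq (μ := μ) (fun y => |g y - ⨍ z in cyl x t, g z ∂μ|),
    setAverage_eq (μ := μ) (fun y => |g y - ⨍ z in cyl y s, g z ∂μ|), smul_eq_mul, smul_eq_mul]
  calc (μ.real (cyl x t))⁻¹ * ∫ y in cyl x t, |g y - ⨍ z in cyl x t, g z ∂μ| ∂μ
      ≤ (μ.real (cyl x t))⁻¹ * ∫ y in cyl x t, (|g y - ⨍ z in cyl y s, g z ∂μ| + c) ∂μ := by
        refine mul_le_mul_of_nonneg_left ?_ (inv_nonneg.2 measureReal_nonneg)
        exact setIntegral_mono_on ((hg.sub (integrable_const _)).abs.integrableOn)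
          (hint.add (integrable_const c)).integrableOn (measurableSet_cyl x t) hpt
    _ = (μ.real (cyl x t))⁻¹ * ∫ y in cyl x t, |g y - ⨍ z in cyl y s, g z ∂μ| ∂μ
          + (μ.real (cyl x t))⁻¹ * μ.real (cyl x t) * c := by
        rw [integral_add hint.integrableOn (integrable_const c).integrableOn, setIntegral_const,
          smul_eq_mul]
        ring
    _ ≤ _ := by gcongr

theorem tendsto_setAverage_abs_sub_setAverage_cyl (hg : Integrable g μ) :
    ∀ᵐ x ∂μ, Tendsto (fun t => ⨍ y in cyl x t, |g y - ⨍ z in cyl x t, g z ∂μ| ∂μ) atTop (𝓝 0) := by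
  filter_upwards [tendsto_setAverage_cyl hg, ae_all_iff.2 fun s =>
    tendsto_setAverage_cyl (hg.sub (integrable_setAverage_cyl g s)).abs] with x hx hdev
  refine tendsto_zero_of_forall_le_of_tendsto (fun t => ?_)
    (fun s t hst => setAverage_abs_sub_setAverage_le hg hst x)
    (fun s => (hdev s).add (tendsto_const_nhds.sub hx).abs) ?_
  · rw [setAverage_eq, smul_eq_mul]
    exact mul_nonneg (inv_nonneg.2 measureReal_nonneg) (integral_nonneg fun _ => abs_nonneg _)
  · simpa using ((tendsto_const_nhds (x := g x)).sub hx).abs.add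
      (hx.sub (tendsto_const_nhds (x := g x))).abs

end Levy

section TotalVariation

variable {Ω : Type*} [MeasurableSpace Ω] {μ : Measure Ω} {f g : Ω → ℝ} {C S : Set Ω}

lemma abs_setIntegral_div_sub_le (hf : IntegrableOn f C μ) (hg : IntegrableOn g C μ)
    (hSC : S ⊆ C) (ha : 0 < ⨍ y in C, f y ∂μ) (hb : 0 < ⨍ y in C, g y ∂μ) :
    |(∫ y in S, f y ∂μ) / (∫ y in C, f y ∂μ) - (∫ y in S, g y ∂μ) / ∫ y in C, g y ∂μ| ≤
      (⨍ y in C, |f y - ⨍ z in C, f z ∂μ| ∂μ) / (⨍ y in C, f y ∂μ)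
        + (⨍ y in C, |g y - ⨍ z in C, g z ∂μ| ∂μ) / ⨍ y in C, g y ∂μ := by
  set a := ⨍ y in C, f y ∂μ
  set b := ⨍ y in C, g y ∂μ
  have hc : μ.real C ≠ 0 := fun h => ha.ne' (by simp [a, setAverage_eq, h])
  have hC : μ C ≠ ∞ := (ENNReal.toReal_ne_zero.1 hc).2
  have hc : 0 < μ.real C := measureReal_nonneg.lt_of_ne' hc
  have hfC : ∫ y in C, f y ∂μ = μ.real C * a := (measure_smul_setAverage f hC).symm
  have hgC : ∫ y in C, g y ∂μ = μ.real C * b := (measure_smul_setAverage g hC).symm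
  have hdiff : (∫ y in S, f y ∂μ) / (∫ y in C, f y ∂μ) - (∫ y in S, g y ∂μ) / (∫ y in C, g y ∂μ)
      = (∫ y in S, (f y / a - g y / b) ∂μ) / μ.real C := by
    rw [hfC, hgC, integral_sub ((hf.mono_set hSC).div_const a) ((hg.mono_set hSC).div_const b),
      integral_div, integral_div]
    field_simp
  have hIf : IntegrableOn (fun y => |f y - a| / a) C μ :=
    (hf.sub (integrableOn_const hC)).abs.div_const a
  have hIg : IntegrableOn (fun y => |g y - b| / b) C μ :=
    (hg.sub (integrableOn_const hC)).abs.div_const b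
  have hbound : |∫ y in S, (f y / a - g y / b) ∂μ|
      ≤ ∫ y in C, (|f y - a| / a + |g y - b| / b) ∂μ :=
    calc |∫ y in S, (f y / a - g y / b) ∂μ| ≤ ∫ y in S, |f y / a - g y / b| ∂μ :=
          abs_integral_le_integral_abs
      _ ≤ ∫ y in C, |f y / a - g y / b| ∂μ :=
          setIntegral_mono_set (hf.div_const a |>.sub (hg.div_const b)).abs
            (Eventually.of_forall fun _ => abs_nonneg _) hSC.eventuallyLE
      _ ≤ ∫ y in C, (|f y - a| / a + |g y - b| / b) ∂μ :=
          setIntegral_mono (hf.div_const a |>.sub (hg.div_const b)).abs (hIf.add hIg)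
            fun _ => abs_div_sub_div_le ha hb
  have hsplit : ∫ y in C, (|f y - a| / a + |g y - b| / b) ∂μ
      = μ.real C * ((⨍ y in C, |f y - a| ∂μ) / a + (⨍ y in C, |g y - b| ∂μ) / b) := by
    rw [integral_add hIf hIg, integral_div, integral_div,
      ← measure_smul_setAverage _ hC, ← measure_smul_setAverage _ hC, smul_eq_mul, smul_eq_mul]
    ring
  rw [hdiff, abs_div, abs_of_pos hc, div_le_iff₀ hc, mul_comm]
  exact hbound.trans_eq hsplit

end TotalVariation

section Merging

variable {X : Type*} [MeasurableSpace X] {ξ P R : Measure (ℕ → X)} {f g : (ℕ → X) → ℝ}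

lemma dTV_nonneg (P R : Measure (ℕ → X)) (x : ℕ → X) (t : ℕ) : 0 ≤ dTV P R x t :=
  Real.iSup_nonneg fun _ => Real.iSup_nonneg fun _ => abs_nonneg _

lemma dTV_le (hf : Integrable f ξ) (hg : Integrable g ξ) (hfP : ∀ s, ∫ y in s, f y ∂ξ = P.real s)
    (hgR : ∀ s, ∫ y in s, g y ∂ξ = R.real s) {x : ℕ → X} {t : ℕ}
    (ha : 0 < ⨍ y in cyl x t, f y ∂ξ) (hb : 0 < ⨍ y in cyl x t, g y ∂ξ) :
    dTV P R x t ≤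
      (⨍ y in cyl x t, |f y - ⨍ z in cyl x t, f z ∂ξ| ∂ξ) / (⨍ y in cyl x t, f y ∂ξ)
        + (⨍ y in cyl x t, |g y - ⨍ z in cyl x t, g z ∂ξ| ∂ξ) / ⨍ y in cyl x t, g y ∂ξ := by
  refine ciSup_le fun k => ciSup_le fun E => ?_
  have h := abs_setIntegral_div_sub_le hf.integrableOn hg.integrableOn
    (S := {y | y ∈ cyl x t ∧ (fun j : Fin k => y (t + j)) ∈ E}) (fun _ hy => hy.1) ha hb
  simp only [hfP, hgR] at h
  exact h

theorem tendsto_dTV_of_tendsto_setAverage (hf : Integrable f ξ) (hg : Integrable g ξ)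
    (hfP : ∀ s, ∫ y in s, f y ∂ξ = P.real s) (hgR : ∀ s, ∫ y in s, g y ∂ξ = R.real s)
    {x : ℕ → X} (hf0 : 0 < f x) (hg0 : 0 < g x)
    (hfx : Tendsto (fun t => ⨍ y in cyl x t, f y ∂ξ) atTop (𝓝 (f x)))
    (hgx : Tendsto (fun t => ⨍ y in cyl x t, g y ∂ξ) atTop (𝓝 (g x)))
    (hdf : Tendsto (fun t => ⨍ y in cyl x t, |f y - ⨍ z in cyl x t, f z ∂ξ| ∂ξ) atTop (𝓝 0))
    (hdg : Tendsto (fun t => ⨍ y in cyl x t, |g y - ⨍ z in cyl x t, g z ∂ξ| ∂ξ) atTop (𝓝 0)) :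
    Tendsto (fun t => dTV P R x t) atTop (𝓝 0) := by
  have hbound : ∀ᶠ t in atTop, dTV P R x t ≤
      (⨍ y in cyl x t, |f y - ⨍ z in cyl x t, f z ∂ξ| ∂ξ) / (⨍ y in cyl x t, f y ∂ξ)
        + (⨍ y in cyl x t, |g y - ⨍ z in cyl x t, g z ∂ξ| ∂ξ) / ⨍ y in cyl x t, g y ∂ξ := by
    filter_upwards [hfx.eventually (lt_mem_nhds hf0), hgx.eventually (lt_mem_nhds hg0)]
      with t ha hb
    exact dTV_le hf hg hfP hgR ha hb
  refine tendsto_of_tendsto_of_tendsto_of_le_of_le' tendsto_const_nhds ?_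
    (Eventually.of_forall fun t => dTV_nonneg P R x t) hbound
  simpa using (hdf.div hfx hf0.ne').add (hdg.div hgx hg0.ne')

end Merging

lemma ae_pos_toReal_rnDeriv {Ω : Type*} [MeasurableSpace Ω] {μ ν : Measure Ω} [SigmaFinite μ]
    [SigmaFinite ν] (h : μ ≪ ν) : ∀ᵐ x ∂μ, 0 < (μ.rnDeriv ν x).toReal := by
  filter_upwards [Measure.rnDeriv_pos h, h.ae_le (Measure.rnDeriv_ne_top μ ν)] with x hpos htop
  exact ENNReal.toReal_pos hpos.ne' htop

section Mixture

variable {Ω ι : Type*} [MeasurableSpace Ω] {w : ι → ℝ} {Q : ι → Measure Ω}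

/-- The Bayes mixture; `ENNReal.ofReal` reads a negative weight as `0`. -/
noncomputable def mixture (w : ι → ℝ) (Q : ι → Measure Ω) : Measure Ω :=
  Measure.sum fun j => ENNReal.ofReal (w j) • Q j

lemma mixture_real_apply [Countable ι] [∀ j, IsFiniteMeasure (Q j)] (hw : ∀ j, 0 ≤ w j)
    (s : Set Ω) : (mixture w Q).real s = ∑' j, w j * (Q j).real s := by
  rw [measureReal_def, mixture, Measure.sum_apply_of_countable]
  simp only [Measure.smul_apply, smul_eq_mul]
  rw [ENNReal.tsum_toReal_eq fun j => ENNReal.mul_ne_top ENNReal.ofReal_ne_top (measure_ne_top _ _)]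
  simp [ENNReal.toReal_ofReal (hw _), measureReal_def]

lemma isProbabilityMeasure_mixture [∀ j, IsProbabilityMeasure (Q j)] (hw : ∀ j, 0 ≤ w j)
    (hw1 : ∑' j, w j = 1) : IsProbabilityMeasure (mixture w Q) := by
  have hsum : Summable w := by
    by_contra h
    rw [tsum_eq_zero_of_not_summable h] at hw1
    exact zero_ne_one hw1
  constructor
  simp [mixture, ← ENNReal.ofReal_tsum_of_nonneg hw hsum, hw1]

lemma absolutelyContinuous_mixture {i : ι} (hw : 0 < w i) : Q i ≪ mixture w Q :=
  (Measure.absolutelyContinuous_smul (ENNReal.ofReal_pos.2 hw).ne').trans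
    (Measure.absolutelyContinuous_sum_right i Measure.AbsolutelyContinuous.rfl)

end Mixture

lemma post_eq_mul_setAverage {X ι : Type*} [MeasurableSpace X] [Countable ι] {w : ι → ℝ}
    {Q : ι → Measure (ℕ → X)} [∀ j, IsFiniteMeasure (Q j)] (hw : ∀ j, 0 ≤ w j) {i : ι}
    {f : (ℕ → X) → ℝ} (hf : ∀ s, ∫ y in s, f y ∂(mixture w Q) = (Q i).real s) (x : ℕ → X)
    (t : ℕ) : post w Q i x t = w i * ⨍ y in cyl x t, f y ∂(mixture w Q) := by
  change w i * (Q i).real (cyl x t) / ∑' j, w j * (Q j).real (cyl x t) = _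
  rw [← mixture_real_apply hw, setAverage_eq, hf, smul_eq_mul, div_eq_mul_inv]
  ring

theorem positive_limsup_implies_merging_general
    {X : Type*} [Fintype X] [MeasurableSpace X] [MeasurableSingletonClass X]
    {ι : Type*} [Countable ι]
    (Q : ι → Measure (ℕ → X)) (hQ : ∀ i, IsProbabilityMeasure (Q i))
    (w : ι → ℝ) (hw : ∀ i, 0 < w i) (hw1 : ∑' i, w i = 1)
    (i₀ : ι) :
    ∀ᵐ x ∂(Q i₀), ∀ i : ι,
      0 < Filter.limsup (fun t => post w Q i x t) atTop →
      Tendsto (fun t => dTV (Q i₀) (Q i) x t) atTop (nhds 0) := by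
  have hw₀ : ∀ i, 0 ≤ w i := fun i => (hw i).le
  have := isProbabilityMeasure_mixture hw₀ hw1 (Q := Q)
  set ξ := mixture w Q
  set f : ι → (ℕ → X) → ℝ := fun j y => ((Q j).rnDeriv ξ y).toReal
  have hac : ∀ j, Q j ≪ ξ := fun j => absolutelyContinuous_mixture (hw j)
  have hfQ : ∀ j s, ∫ y in s, f j y ∂ξ = (Q j).real s := fun j =>
    Measure.setIntegral_toReal_rnDeriv (hac j)
  have hf : ∀ j, Integrable (f j) ξ := fun j => Measure.integrable_toReal_rnDeriv
  have hconv : ∀ᵐ x ∂ξ, ∀ j,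
      Tendsto (fun t => ⨍ y in cyl x t, f j y ∂ξ) atTop (𝓝 (f j x)) ∧
      Tendsto (fun t => ⨍ y in cyl x t, |f j y - ⨍ z in cyl x t, f j z ∂ξ| ∂ξ) atTop (𝓝 0) :=
    ae_all_iff.2 fun j =>
      (tendsto_setAverage_cyl (hf j)).and (tendsto_setAverage_abs_sub_setAverage_cyl (hf j))
  filter_upwards [(hac i₀).ae_le hconv, ae_pos_toReal_rnDeriv (hac i₀)] with x hx hx₀ i hi
  have hpost : Tendsto (fun t => post w Q i x t) atTop (𝓝 (w i * f i x)) :=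
    ((hx i).1.const_mul (w i)).congr fun t => (post_eq_mul_setAverage hw₀ (hfQ i) x t).symm
  rw [hpost.limsup_eq] at hi
  exact tendsto_dTV_of_tendsto_setAverage (hf i₀) (hf i) (hfQ i₀) (hfQ i) hx₀
    (pos_of_mul_pos_right hi (hw₀ i)) (hx i₀).1 (hx i).1 (hx i₀).2 (hx i).2

/-- With probability 1 over sequences sampled from the true measure `P = Q i₀ ∈ ℳ`: for every
`Q ∈ ℳ` whose posterior weight satisfies `limsup_t w(Q | x_{<t}) > 0`, the conditional
measures of `Q` merge with those of `P` in total variation. -/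
theorem positive_limsup_implies_merging
    {X : Type*} [Fintype X] [Nonempty X] [MeasurableSpace X] [MeasurableSingletonClass X]
    {ι : Type*} [Countable ι]
    (Q : ι → Measure (ℕ → X)) (hQ : ∀ i, IsProbabilityMeasure (Q i))
    (w : ι → ℝ) (hw : ∀ i, 0 < w i) (hw1 : ∑' i, w i = 1)
    (i₀ : ι) :
    ∀ᵐ x ∂(Q i₀), ∀ i : ι,
      0 < Filter.limsup (fun t => post w Q i x t) atTop →
      Tendsto (fun t => dTV (Q i₀) (Q i) x t) atTop (nhds 0) :=
  positive_limsup_implies_merging_general Q hQ w hw hw1 i₀
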